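/- Let p be an odd positive integer and let G be a finite simple graph with odd girth at least p+1, and set q = wcol_p(G). Then the chromatic number of the exact p-power graph of G satisfies χ(G^[♯p]) ≤ (⌊p/2⌋+2)^q. -/

import Mathlib

open SimpleGraph

variable {V : Type*}

/-- The exact `p`-power graph: distinct vertices adjacent iff joined by a path of length exactly `p`. -/
def exactPowerGraph (G : SimpleGraph V) (p : ℕ) : SimpleGraph V where
  Adj x y := x ≠ y ∧ ∃ w : G.Walk x y, w.IsPath ∧ w.length = p
  symm := by
    constructor
    rintro x y ⟨h1, w, hw, hl⟩
    exact ⟨h1.symm, w.reverse, hw.reverse, by simpa using hl⟩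
  loopless := by constructor; rintro x ⟨h1, -⟩; exact h1 rfl

/-- `x` is weakly `k`-accessible from `y` w.r.t. the linear order `L`. -/
def WeaklyAccessible (G : SimpleGraph V) (L : LinearOrder V) (k : ℕ) (x y : V) : Prop :=
  L.lt x y ∧ ∃ w : G.Walk x y, w.IsPath ∧ w.length ≤ k ∧
    ∀ z ∈ w.support, z ≠ x → z ≠ y → L.lt x z

/-- The weak `k`-colouring number. -/
noncomputable def wcol (G : SimpleGraph V) (k : ℕ) : ℕ :=
  1 + sInf { m : ℕ | ∃ L : LinearOrder V, ∀ y : V,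
      {x : V | WeaklyAccessible G L k x y}.ncard ≤ m }

/-- `G` has odd girth at least `m`: no odd cycle of length less than `m`. -/
def OddGirthAtLeast (G : SimpleGraph V) (m : ℕ) : Prop :=
  ∀ (v : V) (c : G.Walk v v), c.IsCycle → Odd c.length → m ≤ c.length

/-!
Write `p = 2s + 1` and fix an order witnessing `wcol_p G = q`. Greedily colour the vertices with
`q` colours `ι` so that weakly `p`-accessible pairs get different colours. Call `m` an anchor of
`v` if some walk of length at most `s` from `m` to `v` stays at or above `m`: two anchors of `v` are
joined through `v` by such a walk of length at most `2s`, so one is weakly accessible from the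
other and the anchors of `v` have distinct `ι`-colours. Colour `v` by the vector recording, for
each `ι`-colour, the length of a shortest such walk from the anchor of that colour (`s + 1` if
there is none).

If `x` and `y` are joined by a path of length `p`, its least vertex `m` is an anchor of one end,
say `x`. Equal vectors at `x` and `y` give an anchor `m'` of `y` with `ι m' = ι m` at the same
distance. If `m' ≠ m`, one of them is weakly accessible from the other; if `m' = m`, comparing
parities of walks from `m` produces an odd closed walk of length at most `p`, which the odd girth
forbids.
-/

namespace SimpleGraph.Walk

variable {G : SimpleGraph V}

lemma exists_length_add_eq_of_not_isPath {u v : V} (q : G.Walk u v) (hq : ¬ q.IsPath) :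
    ∃ (w : V) (l : G.Walk w w) (r : G.Walk u v), 0 < l.length ∧
      l.length + r.length = q.length := by
  classical
  induction q with
  | nil => exact absurd IsPath.nil hq
  | @cons u z v h q ih =>
    by_cases hq' : q.IsPath
    · have hu : u ∈ q.support := by
        rw [cons_isPath_iff] at hq
        tauto
      refine ⟨u, cons h (q.takeUntil u hu), q.dropUntil u hu, by simp, ?_⟩
      have := congrArg length (q.take_spec hu)
      simp only [length_append] at this
      simp only [length_cons]
      omega
    · obtain ⟨w, l, r, hl, hlen⟩ := ih hq'
      exact ⟨w, l, cons h r, hl, by simp only [length_cons]; omega⟩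

lemma exists_isCycle_odd_length_le {v : V} (c : G.Walk v v) (hc : Odd c.length) :
    ∃ (u : V) (c' : G.Walk u u), c'.IsCycle ∧ Odd c'.length ∧ c'.length ≤ c.length := by
  induction hn : c.length using Nat.strong_induction_on generalizing v with
  | _ n ih =>
  cases c with
  | nil => simp at hc
  | @cons _ z _ h q =>
    by_cases hq : q.IsPath
    · refine ⟨v, cons h q, (cons_isCycle_iff q h).2 ⟨hq, fun he => ?_⟩, hn ▸ hc, hn.le⟩
      have := hq.length_eq_one_of_mem_edges (Sym2.eq_swap ▸ he)
      simp only [length_cons, this] at hc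
      exact absurd hc (by simp)
    · obtain ⟨w, l, r, hl, hlen⟩ := q.exists_length_add_eq_of_not_isPath hq
      simp only [length_cons] at hn hc
      have hsplit : Odd l.length ∨ Odd (cons h r).length := by
        simp only [length_cons, Nat.odd_iff] at hc ⊢
        omega
      rcases hsplit with hodd | hodd
      · obtain ⟨u, c', hc'⟩ := ih _ (by omega) l hodd rfl
        exact ⟨u, c', hc'.1, hc'.2.1, by omega⟩
      · obtain ⟨u, c', hc'⟩ := ih _ (by simp only [length_cons]; omega) (cons h r) hodd rfl
        exact ⟨u, c', hc'.1, hc'.2.1, by simp only [length_cons] at hc'; omega⟩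

end SimpleGraph.Walk

namespace OddGirthAtLeast

variable {G : SimpleGraph V} {m : ℕ}

lemma even_length {v : V} (hg : OddGirthAtLeast G m) (c : G.Walk v v) (hc : c.length < m) :
    Even c.length := by
  by_contra hodd
  obtain ⟨u, c', hcyc, hodd', hle⟩ :=
    c.exists_isCycle_odd_length_le (Nat.not_even_iff_odd.mp hodd)
  have := hg u c' hcyc hodd'
  omega

lemma even_length_add {x y : V} (hg : OddGirthAtLeast G m) (w₁ w₂ : G.Walk x y)
    (h : w₁.length + w₂.length < m) : Even (w₁.length + w₂.length) := by
  simpa using hg.even_length (w₁.append w₂.reverse) (by simpa using h)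

end OddGirthAtLeast

lemma exists_forall_ncard_weaklyAccessible_lt_wcol [Finite V] (G : SimpleGraph V) (k : ℕ) :
    ∃ L : LinearOrder V, ∀ y, {x | WeaklyAccessible G L k x y}.ncard < wcol G k := by
  have hne : {m : ℕ | ∃ L : LinearOrder V, ∀ y : V,
      {x : V | WeaklyAccessible G L k x y}.ncard ≤ m}.Nonempty :=
    ⟨Nat.card V, LinearOrder.lift' _ (Finite.equivFin V).injective,
      fun _ => Set.ncard_le_card _⟩
  obtain ⟨L, hL⟩ := Nat.sInf_mem hne
  exact ⟨L, fun y => by have := hL y; unfold wcol; omega⟩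

lemma exists_fin_coloring_of_ncard_lt [LinearOrder V] [Finite V] {R : V → V → Prop}
    (hR : ∀ x y, R x y → x < y) {q : ℕ} (hq : ∀ y, {x | R x y}.ncard < q) :
    ∃ c : V → Fin q, ∀ x y, R x y → c x ≠ c y := by
  have hfree : ∀ y (f : ∀ x, x < y → Fin q),
      ∃ i, ∀ x (hx : R x y), f x (hR x y hx) ≠ i := by
    intro y f
    by_contra! hall
    have hsurj : Function.Surjective fun x : {x | R x y} => f x (hR x y x.2) := fun i => by
      obtain ⟨x, hx, rfl⟩ := hall i
      exact ⟨⟨x, hx⟩, rfl⟩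
    have := Nat.card_le_card_of_surjective _ hsurj
    rw [Nat.card_fin, Nat.card_coe_set_eq] at this
    exact (hq y).not_ge this
  choose greedy hgreedy using hfree
  refine ⟨wellFounded_lt.fix greedy, fun x y hxy => ?_⟩
  rw [wellFounded_lt.fix_eq greedy y]
  exact hgreedy y (fun x _ => wellFounded_lt.fix greedy x) x hxy

namespace SimpleGraph

variable [LinearOrder V] {G : SimpleGraph V}

variable (G) in
def ReachAbove (m u : V) (ℓ : ℕ) : Prop :=
  ∃ w : G.Walk m u, w.length = ℓ ∧ ∀ z ∈ w.support, m ≤ z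

variable (G) in
noncomputable def distAbove (m u : V) : ℕ :=
  sInf {ℓ | G.ReachAbove m u ℓ}

namespace ReachAbove

variable {m u : V} {ℓ : ℕ}

lemma distAbove_le (h : G.ReachAbove m u ℓ) : G.distAbove m u ≤ ℓ :=
  Nat.sInf_le h

lemma reachAbove_distAbove (h : G.ReachAbove m u ℓ) : G.ReachAbove m u (G.distAbove m u) :=
  Nat.sInf_mem (s := {ℓ | G.ReachAbove m u ℓ}) ⟨ℓ, h⟩

lemma weaklyAccessible {k : ℕ} (h : G.ReachAbove m u ℓ) (hmu : m < u) (hℓ : ℓ ≤ k) :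
    WeaklyAccessible G ‹_› k m u := by
  classical
  obtain ⟨w, rfl, hw⟩ := h
  exact ⟨hmu, w.bypass, w.bypass_isPath, w.length_bypass_le_length.trans hℓ,
    fun z hz hzm _ => (hw z (w.support_bypass_subset_support hz)).lt_of_ne' hzm⟩

lemma append_reverse {m' : V} {ℓ' : ℕ} (h : G.ReachAbove m u ℓ) (h' : G.ReachAbove m' u ℓ')
    (hm : m ≤ m') : G.ReachAbove m m' (ℓ + ℓ') := by
  obtain ⟨w, rfl, hw⟩ := h
  obtain ⟨w', rfl, hw'⟩ := h'
  refine ⟨w.append w'.reverse, by simp, fun z hz => ?_⟩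
  rw [Walk.mem_support_append_iff, Walk.support_reverse, List.mem_reverse] at hz
  exact hz.elim (hw z) fun hz => hm.trans (hw' z hz)

lemma even_add {n b : ℕ} (hg : OddGirthAtLeast G n) (h : G.ReachAbove m u ℓ)
    (h' : G.ReachAbove m u b) (hn : ℓ + b < n) : Even (ℓ + b) := by
  obtain ⟨w, rfl, -⟩ := h
  obtain ⟨w', rfl, -⟩ := h'
  exact hg.even_length_add w w' hn

lemma weaklyAccessible_or {m' : V} {ℓ' k : ℕ} (h : G.ReachAbove m u ℓ)
    (h' : G.ReachAbove m' u ℓ') (hne : m ≠ m') (hk : ℓ + ℓ' ≤ k) :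
    WeaklyAccessible G ‹_› k m m' ∨ WeaklyAccessible G ‹_› k m' m := by
  rcases hne.lt_or_gt with hlt | hlt
  · exact .inl ((h.append_reverse h' hlt.le).weaklyAccessible hlt hk)
  · exact .inr ((h'.append_reverse h hlt.le).weaklyAccessible hlt (by omega))

end ReachAbove

lemma Walk.exists_reachAbove {x y : V} (P : G.Walk x y) :
    ∃ m a b, G.ReachAbove m x a ∧ G.ReachAbove m y b ∧ a + b = P.length := by
  classical
  obtain ⟨m, hm, hmin⟩ := P.support.toFinset.exists_min_image id ⟨x, by simp⟩
  rw [List.mem_toFinset] at hm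
  simp only [List.mem_toFinset, id] at hmin
  refine ⟨m, _, _, ⟨(P.takeUntil m hm).reverse, rfl, fun z hz => hmin z ?_⟩,
    ⟨P.dropUntil m hm, rfl, fun z hz => hmin z (P.support_dropUntil_subset_support hm hz)⟩,
    ?_⟩
  · rw [Walk.support_reverse, List.mem_reverse] at hz
    exact P.support_takeUntil_subset_support hm hz
  · rw [Walk.length_reverse, ← Walk.length_append, P.take_spec hm]

variable (G) in
def anchors (s : ℕ) (v : V) : Set V :=
  {m | ∃ ℓ ≤ s, G.ReachAbove m v ℓ}

variable {q : ℕ}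

variable (G) in
open Classical in
noncomputable def anchorColoring (s : ℕ) (ι : V → Fin q) (v : V) (i : Fin q) : Fin (s + 2) :=
  if h : ∃ m ∈ G.anchors s v, ι m = i then
    ⟨G.distAbove h.choose v, by
      obtain ⟨⟨ℓ, hℓ, hm⟩, -⟩ := h.choose_spec
      have := hm.distAbove_le
      omega⟩
  else Fin.last (s + 1)

variable (G) in
def SeparatesWeaklyAccessible (k : ℕ) (ι : V → Fin q) : Prop :=
  ∀ x y, WeaklyAccessible G ‹_› k x y → ι x ≠ ι y

section anchorColoring

variable {s : ℕ} {ι : V → Fin q}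

lemma exists_of_anchorColoring_le {v : V} {i : Fin q}
    (h : (G.anchorColoring s ι v i : ℕ) ≤ s) :
    ∃ m ∈ G.anchors s v, ι m = i ∧ G.distAbove m v = G.anchorColoring s ι v i := by
  unfold anchorColoring at h ⊢
  split_ifs at h ⊢ with hex
  · exact ⟨hex.choose, hex.choose_spec.1, hex.choose_spec.2, rfl⟩
  · simp at h

lemma injOn_anchors (hι : G.SeparatesWeaklyAccessible (2 * s + 1) ι) (v : V) :
    Set.InjOn ι (G.anchors s v) := by
  intro m ⟨ℓ, hℓ, hm⟩ m' ⟨ℓ', hℓ', hm'⟩ heq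
  by_contra hne
  rcases hm.weaklyAccessible_or hm' hne (by omega : ℓ + ℓ' ≤ 2 * s + 1) with h | h
  exacts [hι _ _ h heq, hι _ _ h heq.symm]

lemma anchorColoring_apply_of_mem (hι : G.SeparatesWeaklyAccessible (2 * s + 1) ι) {m v : V}
    (hm : m ∈ G.anchors s v) :
    (G.anchorColoring s ι v (ι m) : ℕ) = G.distAbove m v := by
  have h : ∃ m' ∈ G.anchors s v, ι m' = ι m := ⟨m, hm, rfl⟩
  rw [anchorColoring, dif_pos h]
  exact congrArg (G.distAbove · v) (injOn_anchors hι v h.choose_spec.1 hm h.choose_spec.2)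

lemma anchorColoring_ne (hι : G.SeparatesWeaklyAccessible (2 * s + 1) ι)
    {m u w : V} {a b : ℕ} (hg : OddGirthAtLeast G (2 * s + 2))
    (hu : G.ReachAbove m u a) (hw : G.ReachAbove m w b) (ha : a ≤ s) (hab : a + b = 2 * s + 1) :
    G.anchorColoring s ι u ≠ G.anchorColoring s ι w := by
  intro heq
  have hcol := anchorColoring_apply_of_mem hι (⟨a, ha, hu⟩ : m ∈ G.anchors s u)
  have hdist_le := hu.distAbove_le
  obtain ⟨m', ⟨_, -, hm'⟩, hιm', hdist⟩ :=
    exists_of_anchorColoring_le (v := w) (i := ι m) (by rw [← heq, hcol]; omega)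
  rw [← heq, hcol] at hdist
  have hm'w := hm'.reachAbove_distAbove
  rw [hdist] at hm'w
  rcases eq_or_ne m' m with rfl | hne
  · -- `G.distAbove m u` has the parity of both `a` and `b`, but `a + b` is odd
    have hua := hu.reachAbove_distAbove.even_add hg hu (by omega)
    have hwb := hm'w.even_add hg hw (by omega)
    rw [Nat.even_iff] at hua hwb
    omega
  · rcases hm'w.weaklyAccessible_or hw hne (by omega : _ + b ≤ 2 * s + 1) with h | h
    exacts [hι _ _ h hιm', hι _ _ h hιm'.symm]

lemma colorable_exactPowerGraph (hι : G.SeparatesWeaklyAccessible (2 * s + 1) ι)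
    (hg : OddGirthAtLeast G (2 * s + 2)) :
    (exactPowerGraph G (2 * s + 1)).Colorable ((s + 2) ^ q) := by
  let c : (exactPowerGraph G (2 * s + 1)).Coloring (Fin q → Fin (s + 2)) :=
    Coloring.mk (G.anchorColoring s ι) fun {x y} hxy => by
      obtain ⟨-, P, -, hP⟩ := hxy
      obtain ⟨m, a, b, ha, hb, hab⟩ := P.exists_reachAbove
      rcases le_or_gt a s with has | has
      · exact anchorColoring_ne hι hg ha hb has (by omega)
      · exact (anchorColoring_ne hι hg hb ha (by omega) (by omega)).symm
  simpa using c.colorable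

end anchorColoring

end SimpleGraph

/-- Theorem 11(b): for odd positive `p`, a finite graph `G` with odd girth at least `p+1`, and
`q = wcol_p(G)`, `χ(G^[♯p]) ≤ (⌊p/2⌋+2)^q`. -/
theorem chromaticNumber_exactPowerGraph_le_pow_wcol
    [Fintype V] (G : SimpleGraph V) (p : ℕ) (hp : Odd p)
    (hgirth : OddGirthAtLeast G (p + 1)) (q : ℕ) (hq : q = wcol G p) :
    (exactPowerGraph G p).chromaticNumber ≤ (((p / 2 + 2) ^ q : ℕ) : ℕ∞) := by
  obtain ⟨s, rfl⟩ := hp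
  obtain ⟨L, hL⟩ := exists_forall_ncard_weaklyAccessible_lt_wcol G (2 * s + 1)
  let _ := L
  obtain ⟨ι, hι⟩ := exists_fin_coloring_of_ncard_lt (fun x y h => h.1) (hq ▸ hL)
  rw [show (2 * s + 1) / 2 = s by omega]
  exact (colorable_exactPowerGraph hι hgirth).chromaticNumber_le
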